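/- Let (Ω_N) be finite nonempty sets and K_N, θ_N, φ_N ⊆ Ω_N with K_N eventually nonempty. Define Pr_N(A|B) = |A∩B|/|B| for B ≠ ∅. Suppose lim_N Pr_N(φ_N|K_N) = 1 and lim_N Pr_N(θ_N|K_N) exists and equals p > 0. Then K_N ∩ θ_N is eventually nonempty and lim_N Pr_N(φ_N | K_N ∩ θ_N) = 1. -/
import Mathlib


open Filter

/-- Conditional probability over finite sets of worlds: `|A ∩ B| / |B|`. -/
noncomputable def condPr {α : Type*} [DecidableEq α] (A B : Finset α) : ℝ :=
  ((A ∩ B).card : ℝ) / (B.card : ℝ)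

lemma condPr_le_one {α : Type*} [DecidableEq α] (A B : Finset α) : condPr A B ≤ 1 := by
  unfold condPr
  rcases eq_or_ne (B.card : ℝ) 0 with h | h
  · simp [h]
  · rw [div_le_one (lt_of_le_of_ne (by positivity) (Ne.symm h))]
    exact_mod_cast Finset.card_le_card Finset.inter_subset_right

lemma one_sub_condPr {α : Type*} [DecidableEq α] (A B : Finset α) (hB : B.Nonempty) :
    1 - condPr A B = ((B \ A).card : ℝ) / B.card := by
  have hb : (0:ℝ) < B.card := by exact_mod_cast Finset.card_pos.mpr hB
  have hcard : (B \ A).card + (B ∩ A).card = B.card := Finset.card_sdiff_add_card_inter B A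
  have : (A ∩ B).card = (B ∩ A).card := by rw [Finset.inter_comm]
  unfold condPr
  rw [eq_div_iff hb.ne', sub_mul, one_mul, div_mul_cancel₀ _ hb.ne', this]
  push_cast [← hcard]
  ring

lemma condPr_lower {α : Type*} [DecidableEq α] (K θ φ : Finset α)
    (hK : K.Nonempty) (hKθ : (K ∩ θ).Nonempty) :
    1 - (1 - condPr φ K) / condPr θ K ≤ condPr φ (K ∩ θ) := by
  have hk : (0:ℝ) < K.card := by exact_mod_cast Finset.card_pos.mpr hK
  have hc : (0:ℝ) < (K ∩ θ).card := by exact_mod_cast Finset.card_pos.mpr hKθ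
  have hθK : condPr θ K = ((K ∩ θ).card : ℝ) / K.card := by
    unfold condPr; rw [Finset.inter_comm]
  have e1 := one_sub_condPr φ K hK
  have e2 := one_sub_condPr φ (K ∩ θ) hKθ
  have hdiv : (1 - condPr φ K) / condPr θ K = ((K \ φ).card : ℝ) / (K ∩ θ).card := by
    rw [e1, hθK]; field_simp
  have hsub : ((K ∩ θ) \ φ : Finset α) ⊆ K \ φ :=
    Finset.sdiff_subset_sdiff Finset.inter_subset_left le_rfl
  have hle : (((K ∩ θ) \ φ).card : ℝ) ≤ ((K \ φ).card : ℝ) := by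
    exact_mod_cast Finset.card_le_card hsub
  have : 1 - condPr φ (K ∩ θ) ≤ (1 - condPr φ K) / condPr θ K := by
    rw [e2, hdiv]
    exact div_le_div_of_nonneg_right hle hc.le |>.trans_eq rfl
  linarith

/-- Rational Monotonicity (sufficient-condition form): if `Pr_N(φ|K) → 1` and
`Pr_N(θ|K) → p > 0`, then `K ∩ θ` is eventually nonempty and `Pr_N(φ|K∩θ) → 1`. -/
theorem stmt3 {α : Type*} [DecidableEq α]
    (K θ φ : ℕ → Finset α) (p : ℝ)
    (hK : ∀ᶠ N in atTop, (K N).Nonempty)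
    (h1 : Tendsto (fun N => condPr (φ N) (K N)) atTop (nhds 1))
    (h2 : Tendsto (fun N => condPr (θ N) (K N)) atTop (nhds p))
    (hp : 0 < p) :
    (∀ᶠ N in atTop, (K N ∩ θ N).Nonempty) ∧
    Tendsto (fun N => condPr (φ N) (K N ∩ θ N)) atTop (nhds 1) := by
  have hpos : ∀ᶠ N in atTop, 0 < condPr (θ N) (K N) :=
    h2.eventually (eventually_gt_nhds hp)
  have hne : ∀ᶠ N in atTop, (K N ∩ θ N).Nonempty := by
    filter_upwards [hpos, hK] with N hp0 hKN
    rw [Finset.nonempty_iff_ne_empty]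
    intro hcontra
    have : condPr (θ N) (K N) = 0 := by
      unfold condPr
      rw [Finset.inter_comm, hcontra]
      simp
    linarith
  refine ⟨hne, ?_⟩
  have hlim : Tendsto (fun N => 1 - (1 - condPr (φ N) (K N)) / condPr (θ N) (K N))
      atTop (nhds 1) := by
    have : Tendsto (fun N => (1 - condPr (φ N) (K N)) / condPr (θ N) (K N))
        atTop (nhds ((1 - 1) / p)) :=
      Tendsto.div (tendsto_const_nhds.sub h1) h2 hp.ne'
    simpa using tendsto_const_nhds.sub this
  refine tendsto_of_tendsto_of_tendsto_of_le_of_le' hlim tendsto_const_nhds ?_ ?_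
  · filter_upwards [hK, hne] with N hKN hKθN
    exact condPr_lower (K N) (θ N) (φ N) hKN hKθN
  · exact Eventually.of_forall fun N => condPr_le_one _ _
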